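/- arXiv:1606.02961 — 2 statements merged into one kernel-verified Lean document; each statement's English description precedes it below -/
import Mathlib

section
/- Let V ∈ w^{3,2}_{Per_Y}(Y × (−∞,0)) satisfy ∫_{Y×(−∞,0)} D³V : D³ψ dy = 0 for all Y-periodic test functions ψ with ψ(ȳ,0) = ∇ψ(ȳ,0) = 0, together with V(ȳ,0)=0 and ∂V/∂y_N(ȳ,0) = b(ȳ). If V₁, V₂ are two such solutions, then V₁ − V₂ = a y_N² for some constant a ∈ ℝ; i.e., the solution is unique up to adding a monomial a y_N². -/
open MeasureTheory Set

set_option maxHeartbeats 1000000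

private lemma stmt8_expand {n : ℕ} (u : Fin n → ℝ) :
    u = ∑ i, u i • (Pi.single i (1:ℝ) : Fin n → ℝ) := by
  conv_lhs => rw [← Finset.univ_sum_single u]
  refine Finset.sum_congr rfl fun i _ => ?_
  rw [← Pi.single_smul, smul_eq_mul, mul_one]

private lemma stmt8_norm_single {n : ℕ} (i : Fin n) :
    ‖(Pi.single i 1 : Fin n → ℝ)‖ ≤ 1 := by
  rw [pi_norm_le_iff_of_nonneg zero_le_one]
  intro j
  rcases eq_or_ne j i with rfl | h
  · simp
  · simp [Pi.single_eq_of_ne h]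

/-- uniqueness, up to a monomial `a·y_N²`, of the solution of the
microscopic cell problem: if `V₁, V₂ ∈ w^{3,2}_{Per_Y}(Y×(-∞,0))` both satisfy
`∫ D³V : D³ψ = 0` for all periodic test functions `ψ` with
`ψ(·,0) = ∇ψ(·,0) = 0`, together with `V(ȳ,0) = 0` and `∂V/∂y_N(ȳ,0) = b(ȳ)`,
then `V₁ - V₂ = a y_N²` for some constant `a`. -/
theorem stmt8 (n : ℕ) (hn : 1 ≤ n)
    (b : (Fin n → ℝ) → ℝ) (hb : ContDiff ℝ (⊤ : ℕ∞) b)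
    (hbper : ∀ (x : Fin n → ℝ) (i : Fin n), b (x + Pi.single i 1) = b x)
    (S : Set (Fin (n + 1) → ℝ))
    (hS : S = {y | (∀ i : Fin (n + 1), i ≠ Fin.last n →
        y i ∈ Set.Ioo (-(1:ℝ)/2) (1/2)) ∧ y (Fin.last n) < 0})
    -- the Frobenius product `D³u : D³v` of the third derivative tensors
    (frob3 : ((Fin (n + 1) → ℝ) → ℝ) → ((Fin (n + 1) → ℝ) → ℝ) →
      (Fin (n + 1) → ℝ) → ℝ)
    (hfrob3 : ∀ u v y, frob3 u v y = ∑ i : Fin (n + 1), ∑ j : Fin (n + 1),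
      ∑ k : Fin (n + 1),
        iteratedFDeriv ℝ 3 u y ![Pi.single i 1, Pi.single j 1, Pi.single k 1] *
        iteratedFDeriv ℝ 3 v y ![Pi.single i 1, Pi.single j 1, Pi.single k 1])
    (V₁ V₂ : (Fin (n + 1) → ℝ) → ℝ)
    (hsol : ∀ V ∈ ({V₁, V₂} : Set ((Fin (n + 1) → ℝ) → ℝ)),
      ContDiff ℝ 3 V ∧
      (∀ (x : Fin (n + 1) → ℝ) (i : Fin (n + 1)), i ≠ Fin.last n →
        V (x + Pi.single i 1) = V x) ∧
      IntegrableOn (fun y => ‖iteratedFDeriv ℝ 3 V y‖ ^ 2) S ∧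
      (∀ y : Fin (n + 1) → ℝ, y (Fin.last n) = 0 →
        V y = 0 ∧ fderiv ℝ V y (Pi.single (Fin.last n) 1) =
          b (fun i : Fin n => y i.castSucc)) ∧
      (∀ ψ : (Fin (n + 1) → ℝ) → ℝ, ContDiff ℝ 3 ψ →
        (∀ (x : Fin (n + 1) → ℝ) (i : Fin (n + 1)), i ≠ Fin.last n →
          ψ (x + Pi.single i 1) = ψ x) →
        IntegrableOn (fun y => ‖iteratedFDeriv ℝ 3 ψ y‖ ^ 2) S →
        (∀ y : Fin (n + 1) → ℝ, y (Fin.last n) = 0 →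
          ψ y = 0 ∧ fderiv ℝ ψ y = 0) →
        ∫ y in S, frob3 V ψ y = 0)) :
    ∃ a : ℝ, ∀ y : Fin (n + 1) → ℝ, y (Fin.last n) ≤ 0 →
      V₁ y - V₂ y = a * (y (Fin.last n)) ^ 2 := by
  classical
  set N := Fin.last n with hN
  obtain ⟨h1C, h1per, h1int, h1bc, h1weak⟩ := hsol V₁ (Set.mem_insert _ _)
  obtain ⟨h2C, h2per, h2int, h2bc, h2weak⟩ :=
    hsol V₂ (Set.mem_insert_of_mem _ rfl)
  set W : (Fin (n + 1) → ℝ) → ℝ := fun y => V₁ y - V₂ y with hWdef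
  have hWC : ContDiff ℝ 3 W := h1C.sub h2C
  have h1d : Differentiable ℝ V₁ := h1C.differentiable (by norm_num)
  have h2d : Differentiable ℝ V₂ := h2C.differentiable (by norm_num)
  have hWd : Differentiable ℝ W := hWC.differentiable (by norm_num)
  have hWper : ∀ (x : (Fin (n + 1) → ℝ)) (i : Fin (n+1)), i ≠ N → W (x + Pi.single i 1) = W x := by
    intro x i hi
    simp only [hWdef, h1per x i hi, h2per x i hi]
  have hfWsub : ∀ y, fderiv ℝ W y = fderiv ℝ V₁ y - fderiv ℝ V₂ y := by
    intro y
    exact fderiv_sub (h1d y) (h2d y)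
  have hval : ∀ z : (Fin (n + 1) → ℝ), z N = 0 → W z = 0 := by
    intro z hz
    simp only [hWdef, (h1bc z hz).1, (h2bc z hz).1, sub_zero]
  -- boundary conditions for W
  have h0 : ∀ y : (Fin (n + 1) → ℝ), y N = 0 → W y = 0 ∧ fderiv ℝ W y = 0 := by
    intro y hy
    refine ⟨hval y hy, ?_⟩
    have hbasis : ∀ i : Fin (n+1), fderiv ℝ W y (Pi.single i 1) = 0 := by
      intro i
      by_cases hi : i = N
      · subst hi
        rw [hfWsub y, ContinuousLinearMap.sub_apply, (h1bc y hy).2, (h2bc y hy).2,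
          sub_self]
      · have hline : ∀ t : ℝ, W (y + t • (Pi.single i 1 : Fin (n + 1) → ℝ)) = 0 := by
          intro t
          apply hval
          have : (Pi.single i (1:ℝ) : (Fin (n + 1) → ℝ)) N = 0 := Pi.single_eq_of_ne (Ne.symm hi) 1
          simp [this, hy]
        have h1 : HasDerivAt (fun t : ℝ => y + t • (Pi.single i 1 : (Fin (n + 1) → ℝ)))
            (Pi.single i 1) 0 := by
          simpa using ((hasDerivAt_id (0:ℝ)).smul_const (Pi.single i (1:ℝ) : (Fin (n + 1) → ℝ))).const_add y
        have hd : HasDerivAt (fun t : ℝ => W (y + t • (Pi.single i 1 : (Fin (n + 1) → ℝ))))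
            (fderiv ℝ W y (Pi.single i 1)) 0 := by
          have h2 := (hWd (y + (0:ℝ) • (Pi.single i 1 : (Fin (n + 1) → ℝ)))).hasFDerivAt.comp_hasDerivAt 0 h1
          simp only [zero_smul, add_zero] at h2
          exact h2
        have heq : (fun t : ℝ => W (y + t • (Pi.single i 1 : (Fin (n + 1) → ℝ)))) = fun _ => (0:ℝ) :=
          funext hline
        rw [heq] at hd
        exact hd.unique (hasDerivAt_const _ _)
    apply ContinuousLinearMap.ext
    intro v
    conv_lhs => rw [stmt8_expand v]
    rw [_root_.map_sum]
    simp only [_root_.map_smul, hbasis, smul_eq_mul, mul_zero, Finset.sum_const_zero,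
      ContinuousLinearMap.zero_apply]
  -- D³ of W as a difference
  have hsub3 : ∀ y, iteratedFDeriv ℝ 3 W y =
      iteratedFDeriv ℝ 3 V₁ y - iteratedFDeriv ℝ 3 V₂ y := by
    intro y
    have hWeq : W = V₁ + fun z => -V₂ z := by
      funext z; simp [hWdef, sub_eq_add_neg]
    rw [hWeq, iteratedFDeriv_add_apply h1C.contDiffAt h2C.neg.contDiffAt]
    have h2 : iteratedFDeriv ℝ 3 (fun z => -V₂ z) y = -iteratedFDeriv ℝ 3 V₂ y := by
      have h3 : (fun z => -V₂ z) = -V₂ := rfl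
      rw [h3, iteratedFDeriv_neg_apply]
    rw [h2, sub_eq_add_neg]
  -- integrability of ‖D³W‖²
  have hWcont3 : Continuous (iteratedFDeriv ℝ 3 W) := hWC.continuous_iteratedFDeriv le_rfl
  have h1cont3 : Continuous (iteratedFDeriv ℝ 3 V₁) := h1C.continuous_iteratedFDeriv le_rfl
  have h2cont3 : Continuous (iteratedFDeriv ℝ 3 V₂) := h2C.continuous_iteratedFDeriv le_rfl
  have hWint : IntegrableOn (fun y => ‖iteratedFDeriv ℝ 3 W y‖ ^ 2) S := by
    have hg : IntegrableOn (fun y => 2 * ‖iteratedFDeriv ℝ 3 V₁ y‖ ^ 2 +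
        2 * ‖iteratedFDeriv ℝ 3 V₂ y‖ ^ 2) S :=
      (h1int.const_mul 2).add (h2int.const_mul 2)
    refine hg.mono' ((hWcont3.norm.pow 2).aestronglyMeasurable) ?_
    filter_upwards with y
    have h1 : ‖iteratedFDeriv ℝ 3 W y‖ ≤
        ‖iteratedFDeriv ℝ 3 V₁ y‖ + ‖iteratedFDeriv ℝ 3 V₂ y‖ := by
      rw [hsub3 y]; exact norm_sub_le _ _
    have h2 : (0:ℝ) ≤ ‖iteratedFDeriv ℝ 3 W y‖ := norm_nonneg _
    rw [Real.norm_eq_abs, abs_of_nonneg (by positivity)]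
    nlinarith [norm_nonneg (iteratedFDeriv ℝ 3 V₁ y), norm_nonneg (iteratedFDeriv ℝ 3 V₂ y),
      sq_nonneg (‖iteratedFDeriv ℝ 3 V₁ y‖ - ‖iteratedFDeriv ℝ 3 V₂ y‖)]
  -- frob3 continuity and integrability
  have hfrob_cont : ∀ U V : (Fin (n + 1) → ℝ) → ℝ, Continuous (iteratedFDeriv ℝ 3 U) →
      Continuous (iteratedFDeriv ℝ 3 V) → Continuous (frob3 U V) := by
    intro U V hU hV
    have : frob3 U V = fun y => ∑ i : Fin (n+1), ∑ j : Fin (n+1), ∑ k : Fin (n+1),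
        iteratedFDeriv ℝ 3 U y ![Pi.single i 1, Pi.single j 1, Pi.single k 1] *
        iteratedFDeriv ℝ 3 V y ![Pi.single i 1, Pi.single j 1, Pi.single k 1] :=
      funext (hfrob3 U V)
    rw [this]
    refine continuous_finset_sum _ fun i _ => continuous_finset_sum _ fun j _ =>
      continuous_finset_sum _ fun k _ => Continuous.mul ?_ ?_
    · exact (continuous_eval_const _).comp hU
    · exact (continuous_eval_const _).comp hV
  have hentry_bound : ∀ (U : (Fin (n + 1) → ℝ) → ℝ) (y : (Fin (n + 1) → ℝ)) (i j k : Fin (n+1)),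
      |iteratedFDeriv ℝ 3 U y ![Pi.single i 1, Pi.single j 1, Pi.single k 1]| ≤
        ‖iteratedFDeriv ℝ 3 U y‖ := by
    intro U y i j k
    have h := (iteratedFDeriv ℝ 3 U y).le_opNorm
      ![Pi.single i 1, Pi.single j 1, Pi.single k 1]
    rw [← Real.norm_eq_abs]
    refine h.trans ?_
    rw [Fin.prod_univ_three]
    have hi := stmt8_norm_single (n := n+1) i
    have hj := stmt8_norm_single (n := n+1) j
    have hk := stmt8_norm_single (n := n+1) k
    have h0 : (0:ℝ) ≤ ‖iteratedFDeriv ℝ 3 U y‖ := norm_nonneg _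
    simp only [Matrix.cons_val_zero, Matrix.cons_val_one, Matrix.head_cons,
      Matrix.cons_val_two, Matrix.tail_cons]
    have hprod : ‖(Pi.single i 1 : Fin (n + 1) → ℝ)‖ * ‖(Pi.single j 1 : Fin (n + 1) → ℝ)‖ *
        ‖(Pi.single k 1 : Fin (n + 1) → ℝ)‖ ≤ 1 :=
      mul_le_one₀ (mul_le_one₀ hi (norm_nonneg _) hj) (norm_nonneg _) hk
    exact mul_le_of_le_one_right h0 hprod
  have hfrob_int : ∀ U V : (Fin (n + 1) → ℝ) → ℝ, Continuous (iteratedFDeriv ℝ 3 U) →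
      Continuous (iteratedFDeriv ℝ 3 V) →
      IntegrableOn (fun y => ‖iteratedFDeriv ℝ 3 U y‖ ^ 2) S →
      IntegrableOn (fun y => ‖iteratedFDeriv ℝ 3 V y‖ ^ 2) S →
      IntegrableOn (frob3 U V) S := by
    intro U V hUc hVc hUi hVi
    set C : ℝ := ((n:ℝ) + 1)^3 with hC
    have hg : IntegrableOn (fun y => C * ‖iteratedFDeriv ℝ 3 U y‖ ^ 2 +
        C * ‖iteratedFDeriv ℝ 3 V y‖ ^ 2) S :=
      (hUi.const_mul C).add (hVi.const_mul C)
    refine hg.mono' (hfrob_cont U V hUc hVc).aestronglyMeasurable ?_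
    filter_upwards with y
    rw [Real.norm_eq_abs, hfrob3]
    set A := ‖iteratedFDeriv ℝ 3 U y‖ with hA
    set B := ‖iteratedFDeriv ℝ 3 V y‖ with hB
    have hterm : ∀ i j k : Fin (n+1),
        |iteratedFDeriv ℝ 3 U y ![Pi.single i 1, Pi.single j 1, Pi.single k 1] *
         iteratedFDeriv ℝ 3 V y ![Pi.single i 1, Pi.single j 1, Pi.single k 1]| ≤ A * B := by
      intro i j k
      rw [abs_mul]
      have h1 := hentry_bound U y i j k
      have h2 := hentry_bound V y i j k
      have := abs_nonneg (iteratedFDeriv ℝ 3 U y ![Pi.single i 1, Pi.single j 1, Pi.single k 1])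
      have := abs_nonneg (iteratedFDeriv ℝ 3 V y ![Pi.single i 1, Pi.single j 1, Pi.single k 1])
      nlinarith
    have hsum : |∑ i : Fin (n+1), ∑ j : Fin (n+1), ∑ k : Fin (n+1),
        iteratedFDeriv ℝ 3 U y ![Pi.single i 1, Pi.single j 1, Pi.single k 1] *
        iteratedFDeriv ℝ 3 V y ![Pi.single i 1, Pi.single j 1, Pi.single k 1]| ≤
        C * (A * B) := by
      calc _ ≤ ∑ i : Fin (n+1), |∑ j : Fin (n+1), ∑ k : Fin (n+1),
            iteratedFDeriv ℝ 3 U y ![Pi.single i 1, Pi.single j 1, Pi.single k 1] *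
            iteratedFDeriv ℝ 3 V y ![Pi.single i 1, Pi.single j 1, Pi.single k 1]| :=
          Finset.abs_sum_le_sum_abs _ _
        _ ≤ ∑ _i : Fin (n+1), ((n:ℝ)+1)^2 * (A * B) := by
          refine Finset.sum_le_sum fun i _ => ?_
          calc _ ≤ ∑ j : Fin (n+1), |∑ k : Fin (n+1),
                iteratedFDeriv ℝ 3 U y ![Pi.single i 1, Pi.single j 1, Pi.single k 1] *
                iteratedFDeriv ℝ 3 V y ![Pi.single i 1, Pi.single j 1, Pi.single k 1]| :=
              Finset.abs_sum_le_sum_abs _ _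
            _ ≤ ∑ _j : Fin (n+1), ((n:ℝ)+1) * (A * B) := by
              refine Finset.sum_le_sum fun j _ => ?_
              calc _ ≤ ∑ k : Fin (n+1), |iteratedFDeriv ℝ 3 U y
                    ![Pi.single i 1, Pi.single j 1, Pi.single k 1] *
                    iteratedFDeriv ℝ 3 V y
                    ![Pi.single i 1, Pi.single j 1, Pi.single k 1]| :=
                  Finset.abs_sum_le_sum_abs _ _
                _ ≤ ∑ _k : Fin (n+1), A * B :=
                  Finset.sum_le_sum fun k _ => hterm i j k
                _ = ((n:ℝ)+1) * (A * B) := by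
                  rw [Finset.sum_const, Finset.card_univ, Fintype.card_fin]
                  push_cast; ring
            _ = ((n:ℝ)+1)^2 * (A * B) := by
              rw [Finset.sum_const, Finset.card_univ, Fintype.card_fin]
              push_cast; ring
        _ = C * (A * B) := by
          rw [Finset.sum_const, Finset.card_univ, Fintype.card_fin, hC]
          push_cast; ring
    have hC0 : (0:ℝ) ≤ C := by positivity
    have hA0 : (0:ℝ) ≤ A := norm_nonneg _
    have hB0 : (0:ℝ) ≤ B := norm_nonneg _
    nlinarith [hsum, sq_nonneg (A - B), mul_nonneg hC0 (mul_nonneg hA0 hB0),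
      mul_nonneg hC0 (sq_nonneg (A - B))]
  -- apply the weak formulation with ψ = W
  have e1 : ∫ y in S, frob3 V₁ W y = 0 := h1weak W hWC hWper hWint h0
  have e2 : ∫ y in S, frob3 V₂ W y = 0 := h2weak W hWC hWper hWint h0
  have hfrob_sub : ∀ y, frob3 W W y = frob3 V₁ W y - frob3 V₂ W y := by
    intro y
    simp only [hfrob3]
    rw [← Finset.sum_sub_distrib]
    refine Finset.sum_congr rfl fun i _ => ?_
    rw [← Finset.sum_sub_distrib]
    refine Finset.sum_congr rfl fun j _ => ?_
    rw [← Finset.sum_sub_distrib]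
    refine Finset.sum_congr rfl fun k _ => ?_
    rw [hsub3 y, ContinuousMultilinearMap.sub_apply]
    ring
  have h1Wint : IntegrableOn (frob3 V₁ W) S := hfrob_int V₁ W h1cont3 hWcont3 h1int hWint
  have h2Wint : IntegrableOn (frob3 V₂ W) S := hfrob_int V₂ W h2cont3 hWcont3 h2int hWint
  have hWWint : IntegrableOn (frob3 W W) S := hfrob_int W W hWcont3 hWcont3 hWint hWint
  have hint0 : ∫ y in S, frob3 W W y = 0 := by
    calc ∫ y in S, frob3 W W y = ∫ y in S, (frob3 V₁ W y - frob3 V₂ W y) := by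
          refine integral_congr_ae (Filter.Eventually.of_forall fun y => hfrob_sub y)
      _ = (∫ y in S, frob3 V₁ W y) - ∫ y in S, frob3 V₂ W y := integral_sub h1Wint h2Wint
      _ = 0 := by rw [e1, e2, sub_zero]
  -- geometry of S
  have hSopen : IsOpen S := by
    rw [hS]
    have h1 : IsOpen {y : (Fin (n + 1) → ℝ) | ∀ i : Fin (n+1), i ≠ N → y i ∈ Ioo (-(1:ℝ)/2) (1/2)} := by
      rw [setOf_forall]
      refine isOpen_iInter_of_finite fun i => ?_
      rcases eq_or_ne i N with rfl | hi
      · simp only [ne_eq, not_true_eq_false, false_implies, setOf_true]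
        exact isOpen_univ
      · have : {y : (Fin (n + 1) → ℝ) | i ≠ N → y i ∈ Ioo (-(1:ℝ)/2) (1/2)} =
            (fun y : (Fin (n + 1) → ℝ) => y i) ⁻¹' Ioo (-(1:ℝ)/2) (1/2) := by
          ext y; simp [hi]
        rw [this]
        exact isOpen_Ioo.preimage (continuous_apply i)
    have h2 : IsOpen {y : (Fin (n + 1) → ℝ) | y N < 0} := isOpen_Iio.preimage (continuous_apply N)
    exact h1.inter h2
  have hSconv : Convex ℝ S := by
    rw [hS]
    intro p hp q hq s t hs ht hst
    constructor
    · intro i hi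
      have h := convex_Ioo (-(1:ℝ)/2) (1/2) (hp.1 i hi) (hq.1 i hi) hs ht hst
      simpa using h
    · have h := convex_Iio (0:ℝ) (hp.2) (hq.2) hs ht hst
      simpa using h
  set p₀ : (Fin (n + 1) → ℝ) := Pi.single N (-1) with hp₀def
  have hp₀S : p₀ ∈ S := by
    rw [hS]
    constructor
    · intro i hi
      rw [hp₀def, Pi.single_eq_of_ne hi]
      constructor <;> norm_num
    · rw [hp₀def, Pi.single_eq_same]; norm_num
  have hmemS : ∀ y : (Fin (n + 1) → ℝ), (∀ i, i ≠ N → |y i| ≤ 1/2) → y N ≤ 0 → y ∈ closure S := by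
    intro y hy hyN
    have hseq : ∀ k : ℕ, y + (1/((k:ℝ)+1)) • (p₀ - y) ∈ S := by
      intro k
      set t : ℝ := 1/((k:ℝ)+1) with htdef
      have ht0 : 0 < t := by positivity
      have ht1 : t ≤ 1 := by
        rw [htdef]
        rw [div_le_one (by positivity)]
        linarith [Nat.cast_nonneg (α := ℝ) k]
      rw [hS]
      constructor
      · intro i hi
        have hyi := hy i hi
        have hp0i : p₀ i = 0 := Pi.single_eq_of_ne hi (-1)
        have : (y + t • (p₀ - y)) i = (1 - t) * y i := by
          simp [hp0i]; ring
        rw [this]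
        have habs : |(1 - t) * y i| ≤ (1 - t) * (1/2) := by
          rw [abs_mul, abs_of_nonneg (by linarith)]
          have := abs_nonneg (y i)
          nlinarith
        rw [abs_le] at habs
        rw [Set.mem_Ioo]
        constructor <;> nlinarith [habs.1, habs.2]
      · have hp0N : p₀ N = -1 := Pi.single_eq_same N (-1)
        have : (y + t • (p₀ - y)) N = (1 - t) * y N - t := by
          simp [hp0N]; ring
        rw [this]
        nlinarith
    have htend : Filter.Tendsto (fun k : ℕ => y + (1/((k:ℝ)+1)) • (p₀ - y))
        Filter.atTop (nhds y) := by
      have h1 := tendsto_one_div_add_atTop_nhds_zero_nat (𝕜 := ℝ)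
      have h2 := (h1.smul_const (p₀ - y)).const_add y
      simpa using h2
    exact mem_closure_of_tendsto htend (Filter.Eventually.of_forall hseq)
  -- frob3 W W vanishes on S
  have hWWcont : Continuous (frob3 W W) := hfrob_cont W W hWcont3 hWcont3
  have hfrob_nonneg : ∀ y, 0 ≤ frob3 W W y := by
    intro y
    rw [hfrob3]
    exact Finset.sum_nonneg fun i _ => Finset.sum_nonneg fun j _ =>
      Finset.sum_nonneg fun k _ => mul_self_nonneg _
  have hae : frob3 W W =ᵐ[volume.restrict S] 0 :=
    (setIntegral_eq_zero_iff_of_nonneg_ae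
      (Filter.Eventually.of_forall hfrob_nonneg) hWWint).mp hint0
  have hzeroS : ∀ y ∈ S, frob3 W W y = 0 := by
    intro y hy
    have h := Measure.eqOn_of_ae_eq hae hWWcont.continuousOn continuousOn_const
      (by rw [hSopen.interior_eq]; exact subset_closure)
    exact h hy
  have hentry : ∀ y ∈ S, ∀ i j k : Fin (n+1),
      iteratedFDeriv ℝ 3 W y ![Pi.single i 1, Pi.single j 1, Pi.single k 1] = 0 := by
    intro y hy i j k
    have h := hzeroS y hy
    rw [hfrob3] at h
    have h1 := (Finset.sum_eq_zero_iff_of_nonneg fun i _ => Finset.sum_nonneg fun j _ =>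
      Finset.sum_nonneg fun k _ => mul_self_nonneg _).mp h i (Finset.mem_univ i)
    have h2 := (Finset.sum_eq_zero_iff_of_nonneg fun j _ =>
      Finset.sum_nonneg fun k _ => mul_self_nonneg _).mp h1 j (Finset.mem_univ j)
    have h3 := (Finset.sum_eq_zero_iff_of_nonneg fun k _ =>
      mul_self_nonneg _).mp h2 k (Finset.mem_univ k)
    exact mul_self_eq_zero.mp h3
  have hD3 : ∀ y ∈ S, iteratedFDeriv ℝ 3 W y = 0 := by
    intro y hy
    apply ContinuousMultilinearMap.toMultilinearMap_injective
    apply Module.Basis.ext_multilinear (fun _ => Pi.basisFun ℝ (Fin (n+1)))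
    intro v
    have h := hentry y hy (v 0) (v 1) (v 2)
    have hveq : (fun i : Fin 3 => (Pi.basisFun ℝ (Fin (n+1))) (v i)) =
        ![Pi.single (v 0) 1, Pi.single (v 1) 1, Pi.single (v 2) 1] := by
      funext t
      fin_cases t <;> simp [Pi.basisFun_apply]
    simp only [ContinuousMultilinearMap.coe_coe, hveq, ContinuousMultilinearMap.zero_apply]
    exact h
  -- second derivative is constant on S
  have hD2C : ContDiff ℝ 1 (iteratedFDeriv ℝ 2 W) := hWC.iteratedFDeriv_right (by norm_num)
  have hD2diff : Differentiable ℝ (iteratedFDeriv ℝ 2 W) := hD2C.differentiable (by norm_num)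
  have hfd3zero : ∀ y ∈ S, fderiv ℝ (iteratedFDeriv ℝ 2 W) y = 0 := by
    intro y hy
    ext v m
    have hkey : fderiv ℝ (iteratedFDeriv ℝ 2 W) y v m =
        iteratedFDeriv ℝ 3 W y (Fin.cons v m) := by
      rw [iteratedFDeriv_succ_apply_left]
      simp [Fin.tail_cons]
    rw [hkey, hD3 y hy]
    simp
  have hC2 : ∀ y ∈ S, iteratedFDeriv ℝ 2 W y = iteratedFDeriv ℝ 2 W p₀ := by
    intro y hy
    have h := Convex.norm_image_sub_le_of_norm_fderiv_le (f := iteratedFDeriv ℝ 2 W)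
      (C := 0) (fun x _ => hD2diff x) (fun x hx => by rw [hfd3zero x hx, norm_zero])
      hSconv hp₀S hy
    simp only [zero_mul] at h
    have := le_antisymm h (norm_nonneg _)
    rwa [norm_eq_zero, sub_eq_zero] at this
  set F : (Fin (n + 1) → ℝ) → ((Fin (n + 1) → ℝ) →L[ℝ] ℝ) := fderiv ℝ W with hFdef
  have hF2 : ContDiff ℝ 2 F := hWC.fderiv_right (by norm_num)
  have hFdiff : Differentiable ℝ F := hF2.differentiable (by norm_num)
  set K : (Fin (n + 1) → ℝ) →L[ℝ] (Fin (n + 1) → ℝ) →L[ℝ] ℝ := fderiv ℝ F p₀ with hKdef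
  have hKsymm : ∀ u w : (Fin (n + 1) → ℝ), K u w = K w u := by
    intro u w
    exact second_derivative_symmetric (f := W) (f' := F) (f'' := K)
      (fun z => (hWd z).hasFDerivAt) (hFdiff p₀).hasFDerivAt u w
  have hfdF : ∀ y ∈ S, fderiv ℝ F y = K := by
    intro y hy
    ext u w
    have h1 : fderiv ℝ F y u w = iteratedFDeriv ℝ 2 W y ![u, w] := by
      rw [iteratedFDeriv_two_apply]
      simp [hFdef]
    have h2 : K u w = iteratedFDeriv ℝ 2 W p₀ ![u, w] := by
      rw [iteratedFDeriv_two_apply]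
      simp [hKdef, hFdef]
    rw [h1, h2, hC2 y hy]
  have hFaff : ∀ y ∈ S, F y = F p₀ + K (y - p₀) := by
    intro y hy
    have h := Convex.norm_image_sub_le_of_norm_fderiv_le' (f := F) (φ := K) (C := 0)
      (fun x _ => hFdiff x) (fun x hx => by rw [hfdF x hx, sub_self, norm_zero])
      hSconv hp₀S hy
    simp only [zero_mul] at h
    have h2 := le_antisymm h (norm_nonneg _)
    rw [norm_eq_zero, sub_sub, sub_eq_zero] at h2
    exact h2
  have hFcont : Continuous F := hF2.continuous
  have hFaffcl : ∀ y ∈ closure S, F y = F p₀ + K (y - p₀) := by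
    have hg : Continuous fun y : (Fin (n + 1) → ℝ) => F p₀ + K (y - p₀) := by
      exact continuous_const.add (K.continuous.comp (continuous_id.sub continuous_const))
    exact fun y hy => Set.EqOn.closure (fun z hz => hFaff z hz) hFcont hg hy
  -- boundary analysis
  have hz0 : (0:(Fin (n + 1) → ℝ)) ∈ closure S := by
    refine hmemS 0 (fun i _ => by norm_num) (by norm_num)
  have hF0 : F (0:(Fin (n + 1) → ℝ)) = 0 := (h0 0 rfl).2
  have hc0 : F p₀ = K p₀ := by
    have h := hFaffcl 0 hz0
    rw [hF0, zero_sub, _root_.map_neg] at h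
    have := h.symm
    rw [add_neg_eq_zero] at this
    exact this
  have hKi : ∀ i : Fin (n+1), i ≠ N → K (Pi.single i 1) = 0 := by
    intro i hi
    set z : (Fin (n + 1) → ℝ) := ((1:ℝ)/2) • (Pi.single i 1 : Fin (n + 1) → ℝ) with hzdef
    have hzN : z N = 0 := by
      rw [hzdef]
      simp [Pi.single_eq_of_ne (Ne.symm hi)]
    have hzcl : z ∈ closure S := by
      refine hmemS z (fun j _ => ?_) (le_of_eq hzN)
      rcases eq_or_ne j i with rfl | hj
      · have hzj : z j = 1/2 := by rw [hzdef]; simp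
        rw [hzj, abs_le]; constructor <;> norm_num
      · have hzj : z j = 0 := by rw [hzdef]; simp [Pi.single_eq_of_ne hj]
        rw [hzj]; norm_num
    have h := hFaffcl z hzcl
    rw [(h0 z hzN).2, _root_.map_sub, hc0, hzdef, _root_.map_smul] at h
    have h2 : (0 : (Fin (n + 1) → ℝ) →L[ℝ] ℝ) = ((1:ℝ)/2) • K (Pi.single i 1) := by
      rw [h]; abel
    have h3 := congrArg (fun T => (2:ℝ) • T) h2
    simpa using h3.symm
  set eN : (Fin (n + 1) → ℝ) := Pi.single N 1 with heNdef
  set a : ℝ := K eN eN / 2 with hadef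
  have hKuw : ∀ u w : (Fin (n + 1) → ℝ), K u w = 2 * a * (u N * w N) := by
    intro u w
    have hKeNw : ∀ w : (Fin (n + 1) → ℝ), K eN w = w N * K eN eN := by
      intro w
      conv_lhs => rw [stmt8_expand w]
      rw [_root_.map_sum]
      rw [Finset.sum_eq_single N]
      · rw [_root_.map_smul]; simp [heNdef, smul_eq_mul]
      · intro i _ hiN
        rw [_root_.map_smul]
        have : K eN (Pi.single i 1) = K (Pi.single i 1) eN := hKsymm _ _
        rw [this, hKi i hiN]
        simp
      · intro h; exact absurd (Finset.mem_univ N) h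
    have hu : K u = u N • K eN := by
      conv_lhs => rw [stmt8_expand u]
      rw [_root_.map_sum]
      rw [Finset.sum_eq_single N]
      · rw [_root_.map_smul]
      · intro i _ hiN
        rw [_root_.map_smul, hKi i hiN]
        simp
      · intro h; exact absurd (Finset.mem_univ N) h
    rw [hu]
    rw [ContinuousLinearMap.smul_apply, hKeNw w, hadef]
    simp [smul_eq_mul]
    ring
  have hFeq : ∀ y ∈ closure S, F y = K y := by
    intro y hy
    rw [hFaffcl y hy, hc0, _root_.map_sub]
    abel
  -- the quadratic comparison function
  set π : (Fin (n + 1) → ℝ) →L[ℝ] ℝ := ContinuousLinearMap.proj N with hπdef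
  have hπapp : ∀ (z : (Fin (n + 1) → ℝ)), π z = z N := fun z => rfl
  have hquad : ∀ y : (Fin (n + 1) → ℝ), HasFDerivAt (fun z : (Fin (n + 1) → ℝ) => a * (z N)^2)
      ((2 * a * (y N)) • π) y := by
    intro y
    have hπd : HasFDerivAt (fun z : (Fin (n + 1) → ℝ) => z N) π y := π.hasFDerivAt
    have h1 : HasFDerivAt (fun z : (Fin (n + 1) → ℝ) => a * (z N * z N)) (a • (y N • π + y N • π)) y :=
      (hπd.mul hπd).const_mul a
    have heq : (fun z : (Fin (n + 1) → ℝ) => a * (z N * z N)) = fun z : (Fin (n + 1) → ℝ) => a * (z N)^2 := by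
      funext z; ring
    rw [heq] at h1
    convert h1 using 1
    ext w
    simp [hπapp, smul_eq_mul]
    ring
  have hHdiff : Differentiable ℝ (fun z : (Fin (n + 1) → ℝ) => W z - a * (z N)^2) := by
    intro y
    exact ((hWd y).hasFDerivAt.sub (hquad y)).differentiableAt
  have hHzero : ∀ y ∈ closure S, fderiv ℝ (fun z : (Fin (n + 1) → ℝ) => W z - a * (z N)^2) y = 0 := by
    intro y hy
    have hdW : HasFDerivAt W (F y) y := (hWd y).hasFDerivAt
    have h : HasFDerivAt (fun z : (Fin (n + 1) → ℝ) => W z - a * (z N)^2) _ y := hdW.sub (hquad y)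
    rw [h.fderiv]
    ext w
    rw [ContinuousLinearMap.sub_apply, hFeq y hy, hKuw y w]
    simp [hπapp, smul_eq_mul]
    ring
  have hclconv : Convex ℝ (closure S) := hSconv.closure
  have hfinal : ∀ y ∈ closure S, W y = a * (y N)^2 := by
    intro y hy
    have h := Convex.norm_image_sub_le_of_norm_fderiv_le
      (f := fun z : (Fin (n + 1) → ℝ) => W z - a * (z N)^2) (C := 0)
      (fun x _ => hHdiff x) (fun x hx => by rw [hHzero x hx, norm_zero]) hclconv hz0 hy
    simp only [zero_mul] at h
    have h2 := le_antisymm h (norm_nonneg _)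
    rw [norm_eq_zero, sub_eq_zero] at h2
    have h0' : W (0:(Fin (n + 1) → ℝ)) - a * ((0:(Fin (n + 1) → ℝ)) N)^2 = 0 := by
      rw [hval 0 rfl]
      norm_num
    rw [h0'] at h2
    have := sub_eq_zero.mp h2
    linarith [this]
  -- periodicity: integer translates
  have hper_int : ∀ (i : Fin (n+1)), i ≠ N → ∀ (k : ℤ) (x : (Fin (n + 1) → ℝ)),
      W (x + k • (Pi.single i 1 : Fin (n + 1) → ℝ)) = W x := by
    intro i hi k
    induction k using Int.induction_on with
    | zero => intro x; simp
    | succ m ih =>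
      intro x
      have heq : x + ((m : ℤ) + 1) • (Pi.single i 1 : Fin (n + 1) → ℝ) =
          (x + (m : ℤ) • (Pi.single i 1 : Fin (n + 1) → ℝ)) + Pi.single i 1 := by
        rw [add_smul, one_smul, ← add_assoc]
      rw [heq, hWper _ i hi]
      exact ih x
    | pred m ih =>
      intro x
      have h2 := hWper (x + (-(m : ℤ) - 1) • (Pi.single i 1 : Fin (n + 1) → ℝ)) i hi
      have heq : (x + (-(m : ℤ) - 1) • (Pi.single i 1 : Fin (n + 1) → ℝ)) + Pi.single i 1 =
          x + (-(m : ℤ)) • (Pi.single i 1 : Fin (n + 1) → ℝ) := by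
        rw [sub_smul, one_smul, add_assoc]
        congr 1
        abel
      rw [heq] at h2
      rw [← h2]
      exact ih x
  have htrans : ∀ (x : (Fin (n + 1) → ℝ)) (c : Fin (n+1) → ℤ) (s : Finset (Fin (n+1))), N ∉ s →
      W (x + ∑ i ∈ s, c i • (Pi.single i 1 : Fin (n + 1) → ℝ)) = W x := by
    intro x c s
    induction s using Finset.induction_on generalizing x with
    | empty => intro _; simp
    | @insert j s' hj ih =>
      intro hNs
      have hjN : j ≠ N := by
        intro h; exact hNs (h ▸ Finset.mem_insert_self j s')
      have hNs' : N ∉ s' := fun h => hNs (Finset.mem_insert_of_mem h)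
      rw [Finset.sum_insert hj]
      have heq : x + (c j • (Pi.single j 1 : Fin (n + 1) → ℝ) + ∑ i ∈ s', c i • (Pi.single i 1 : Fin (n + 1) → ℝ)) =
          (x + ∑ i ∈ s', c i • (Pi.single i 1 : Fin (n + 1) → ℝ)) + c j • (Pi.single j 1 : Fin (n + 1) → ℝ) := by
        abel
      rw [heq, hper_int j hjN (c j) _, ih _ hNs']
  -- conclusion
  refine ⟨a, ?_⟩
  intro y hyN
  set c : Fin (n+1) → ℤ := fun i => round (y i) with hcdef
  set T : (Fin (n + 1) → ℝ) := ∑ i ∈ Finset.univ.erase N, c i • (Pi.single i 1 : Fin (n + 1) → ℝ) with hTdef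
  have hTapp : ∀ j, T j = if j = N then 0 else (c j : ℝ) := by
    intro j
    rw [hTdef, Finset.sum_apply]
    have hterm : ∀ i, (c i • (Pi.single i 1 : Fin (n + 1) → ℝ)) j =
        if i = j then (c i : ℝ) else 0 := by
      intro i
      rcases eq_or_ne i j with rfl | hij
      · simp
      · simp [Pi.single_eq_of_ne hij.symm, hij]
    simp only [hterm]
    rw [Finset.sum_ite_eq' (Finset.univ.erase N) j (fun i => (c i : ℝ))]
    rcases eq_or_ne j N with rfl | hj
    · simp
    · simp [Finset.mem_erase, hj]
  set y' : (Fin (n + 1) → ℝ) := y - T with hy'def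
  have hy'N : y' N = y N := by
    rw [hy'def]
    simp [hTapp N]
  have hy'cl : y' ∈ closure S := by
    refine hmemS y' (fun i hi => ?_) (by rw [hy'N]; exact hyN)
    rw [hy'def]
    simp only [Pi.sub_apply, hTapp i, if_neg hi, hcdef]
    exact abs_sub_round (y i)
  have hWy : W y = W y' := by
    have heq : y = y' + T := by rw [hy'def]; abel
    rw [heq, hTdef]
    exact htrans y' c _ (Finset.notMem_erase N _)
  have hfin := hfinal y' hy'cl
  show V₁ y - V₂ y = a * (y N)^2
  calc V₁ y - V₂ y = W y := rfl
    _ = W y' := hWy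
    _ = a * (y' N)^2 := hfin
    _ = a * (y N)^2 := by rw [hy'N]
end

section
/- Let b be smooth Y-periodic and α = 3/2; let h_ε be the boundary-layer correction function defined by h_ε(x̄,x_N) = g_ε(x̄)((x_N+ε)/(g_ε(x̄)+ε))⁴ for −ε ≤ x_N ≤ g_ε(x̄), g_ε(x̄)=ε^{3/2} b(x̄/ε). Then the unfolded second derivatives satisfy ε^{1/2} ∂²h_ε/∂x_i∂x_j (ε[x̄/ε]+εȳ, ε y_N) → ∂²(b(ȳ)(y_N+1)⁴)/∂y_i∂y_j as ε → 0, uniformly for (ȳ,y_N) ∈ Y × (−1,0), for all i,j = 1,…,N. -/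
open MeasureTheory Set Topology Filter

section Aux

variable {E F : Type*} [NormedAddCommGroup E] [NormedSpace ℝ E]
  [NormedAddCommGroup F] [NormedSpace ℝ F]

lemma aux_fderiv_comp_add (g : E → F) (c x : E) (hg : DifferentiableAt ℝ g (x + c)) :
    fderiv ℝ (fun y => g (y + c)) x = fderiv ℝ g (x + c) := by
  have h2 : HasFDerivAt (fun y : E => y + c) (ContinuousLinearMap.id ℝ E) x :=
    (hasFDerivAt_id x).add_const c
  have h3 := hg.hasFDerivAt.comp x h2
  simpa [Function.comp_def] using h3.fderiv

lemma aux_iFD_comp_add (g : E → F) (hg : ContDiff ℝ (⊤ : ℕ∞) g) (c : E) :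
    ∀ (m : ℕ) (x : E),
      iteratedFDeriv ℝ m (fun y => g (y + c)) x = iteratedFDeriv ℝ m g (x + c) := by
  intro m
  induction m with
  | zero => intro x; ext m'; simp
  | succ m ih =>
    intro x
    ext m'
    rw [iteratedFDeriv_succ_apply_left, iteratedFDeriv_succ_apply_left]
    rw [show (iteratedFDeriv ℝ m fun y => g (y + c))
        = fun y => iteratedFDeriv ℝ m g (y + c) from funext ih]
    rw [aux_fderiv_comp_add _ c x
      ((hg.differentiable_iteratedFDeriv (by exact_mod_cast ENat.coe_lt_top m)).differentiableAt)]

lemma aux_iFD_congr_nhds {f₁ f : E → F} {x : E} (hf : f₁ =ᶠ[𝓝 x] f) (m : ℕ) :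
    iteratedFDeriv ℝ m f₁ x = iteratedFDeriv ℝ m f x := by
  rw [← iteratedFDerivWithin_univ, ← iteratedFDerivWithin_univ]
  exact Filter.EventuallyEq.iteratedFDerivWithin_eq
    (by rwa [nhdsWithin_univ]) hf.eq_of_nhds m

lemma aux_iFD2_affine (f : E → F) (hf : ContDiff ℝ (⊤ : ℕ∞) f) (ε : ℝ) (c x u v : E) :
    iteratedFDeriv ℝ 2 (fun y => f (ε • y + c)) x ![u, v]
      = (ε ^ 2) • iteratedFDeriv ℝ 2 f (ε • x + c) ![u, v] := by
  have hfc : ContDiff ℝ (⊤ : ℕ∞) (fun y => f (y + c)) :=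
    hf.comp (contDiff_id.add contDiff_const)
  have hL : (fun y : E => f (ε • y + c))
      = (fun y => f (y + c)) ∘ (ε • ContinuousLinearMap.id ℝ E) := by
    funext y; simp
  rw [hL, ContinuousLinearMap.iteratedFDeriv_comp_right _ hfc x ((by exact WithTop.coe_le_coe.2 (le_top : (2:ℕ∞) ≤ ⊤))),
    ContinuousMultilinearMap.compContinuousLinearMap_apply]
  have h1 : (fun i => (ε • ContinuousLinearMap.id ℝ E) (![u, v] i))
      = fun i => ε • (![u, v] i) := by
    funext i; simp
  rw [aux_iFD_comp_add f hf c 2, h1,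
    (iteratedFDeriv ℝ 2 f _).map_smul_univ (fun _ => ε) ![u, v]]
  have : ((ε • ContinuousLinearMap.id ℝ E) x) = ε • x := by simp
  rw [this]
  simp [Finset.prod_const]

end Aux

set_option maxHeartbeats 1600000 in
/-- with `α = 3/2`, the unfolded second derivatives of the
boundary-layer function `h_ε` satisfy
`ε^{1/2} ∂²h_ε/∂x_i∂x_j (ε[x̄/ε]+εȳ, εy_N) → ∂²(b(ȳ)(y_N+1)⁴)/∂y_i∂y_j`
as `ε → 0⁺`, uniformly for `(ȳ,y_N) ∈ Y × (-1,0)`, for all `i,j`. -/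
theorem stmt13 (n : ℕ) (hn : 1 ≤ n)
    (b : (Fin n → ℝ) → ℝ) (hb : ContDiff ℝ (⊤ : ℕ∞) b)
    (hb_bdd : ∀ m : ℕ, ∃ M : ℝ, ∀ x, ‖iteratedFDeriv ℝ m b x‖ ≤ M)
    (hb_per : ∀ (x : Fin n → ℝ) (i : Fin n), b (x + Pi.single i 1) = b x)
    (hb_nonneg : ∀ x, 0 ≤ b x)
    (g : ℝ → (Fin n → ℝ) → ℝ)
    (hg : ∀ ε x, g ε x = ε ^ ((3:ℝ)/2) * b (ε⁻¹ • x))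
    (h : ℝ → (Fin n → ℝ) × ℝ → ℝ)
    (hh : ∀ (ε : ℝ) (p : (Fin n → ℝ) × ℝ),
      h ε p = if p.2 ≤ -ε then 0 else g ε p.1 * ((p.2 + ε) / (g ε p.1 + ε)) ^ 4)
    (e : Fin (n + 1) → (Fin n → ℝ) × ℝ)
    (he : ∀ i : Fin (n + 1), e i = if hi : (i : ℕ) < n
      then (Pi.single (⟨i, hi⟩ : Fin n) 1, 0) else (0, 1))
    -- the unfolding evaluation point `(ε k + ε ȳ, ε y_N)`, `k = [x̄/ε]`
    (pt : ℝ → (Fin n → ℤ) → (Fin n → ℝ) × ℝ → (Fin n → ℝ) × ℝ)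
    (hpt : ∀ ε k q, pt ε k q = (ε • ((fun i => ((k i : ℤ) : ℝ)) + q.1), ε * q.2))
    (B : (Fin n → ℝ) × ℝ → ℝ) (hB : ∀ q, B q = b q.1 * (q.2 + 1) ^ 4)
    (Y : Set (Fin n → ℝ))
    (hY : Y = Set.univ.pi fun _ => Set.Ioo (-(1:ℝ)/2) (1/2)) :
    ∀ (i j : Fin (n + 1)) (k : Fin n → ℤ),
      TendstoUniformlyOn
        (fun (ε : ℝ) (q : (Fin n → ℝ) × ℝ) =>
          ε ^ ((1:ℝ)/2) * iteratedFDeriv ℝ 2 (h ε) (pt ε k q) ![e i, e j])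
        (fun q => iteratedFDeriv ℝ 2 B q ![e i, e j])
        (𝓝[>] (0:ℝ)) (Y ×ˢ Set.Ioo (-1 : ℝ) 0) := by
  intro i j k
  -- bound on b
  obtain ⟨M₀, hM₀⟩ := hb_bdd 0
  have hM : ∀ x, |b x| ≤ M₀ := by
    intro x
    have := hM₀ x
    rwa [norm_iteratedFDeriv_zero, Real.norm_eq_abs] at this
  have hM₀0 : 0 ≤ M₀ := (abs_nonneg (b 0)).trans (hM 0)
  set δ : ℝ := 1 / (2 * (M₀ + 1)) with hδdef
  have hδ : 0 < δ := by positivity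
  -- denominator bound
  have hden : ∀ s : ℝ, ∀ x, |s| < δ → (1:ℝ)/2 < 1 + s * b x := by
    intro s x hs
    have h1 : |s * b x| ≤ δ * M₀ := by
      rw [abs_mul]
      exact mul_le_mul hs.le (hM x) (abs_nonneg _) hδ.le
    have h2 : δ * M₀ < 1/2 := by
      rw [hδdef]
      rw [div_mul_eq_mul_div, one_mul, div_lt_div_iff₀ (by positivity) (by norm_num)]
      nlinarith
    have := (abs_le.1 h1).1
    linarith
  -- the joint family
  set Φ : ℝ × ((Fin n → ℝ) × ℝ) → ℝ :=
    fun p => b p.2.1 * (p.2.2 + 1) ^ 4 * ((1 + p.1 * b p.2.1) ^ 4)⁻¹ with hΦdef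
  set F : ℝ → ((Fin n → ℝ) × ℝ) → ℝ :=
    fun s q => iteratedFDeriv ℝ 2 (fun q' => Φ (s, q')) q ![e i, e j] with hFdef
  set Ω : Set (ℝ × ((Fin n → ℝ) × ℝ)) := Ioo (-δ) δ ×ˢ univ with hΩdef
  have hΩopen : IsOpen Ω := isOpen_Ioo.prod isOpen_univ
  set S : Set ((Fin n → ℝ) × ℝ) := Y ×ˢ Ioo (-1 : ℝ) 0 with hSdef
  set K : Set ((Fin n → ℝ) × ℝ) :=
    (Set.univ.pi fun _ : Fin n => Icc (-(1:ℝ)/2) (1/2)) ×ˢ Icc (-1 : ℝ) 0 with hKdef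
  set U : Set ℝ := Icc (-(δ/2)) (δ/2) with hUdef
  -- smoothness of Φ on Ω
  have hΦΩ : ContDiffOn ℝ (⊤ : ℕ∞) Φ Ω := by
    have h1 : ContDiff ℝ (⊤ : ℕ∞) (fun p : ℝ × ((Fin n → ℝ) × ℝ) => b p.2.1 * (p.2.2 + 1) ^ 4) :=
      (hb.comp (contDiff_snd.fst)).mul ((contDiff_snd.snd.add contDiff_const).pow 4)
    have h2 : ContDiff ℝ (⊤ : ℕ∞) (fun p : ℝ × ((Fin n → ℝ) × ℝ) => (1 + p.1 * b p.2.1) ^ 4) :=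
      ((contDiff_const.add (contDiff_fst.mul (hb.comp (contDiff_snd.fst)))).pow 4)
    refine h1.contDiffOn.mul (h2.contDiffOn.inv ?_)
    rintro ⟨s, q⟩ ⟨hs, -⟩
    have := hden s q.1 (abs_lt.2 ⟨hs.1, hs.2⟩)
    positivity
  -- joint continuity of F on Ω
  have hΦ' : ContDiffOn ℝ (⊤ : ℕ∞) (fderiv ℝ Φ) Ω :=
    hΦΩ.fderiv_of_isOpen hΩopen (by simp)
  have hdiffΦ : ∀ p ∈ Ω, DifferentiableAt ℝ Φ p := fun p hp =>
    ((hΦΩ.differentiableOn (by simp)).differentiableAt (hΩopen.mem_nhds hp))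
  have hdiffΦ' : ∀ p ∈ Ω, DifferentiableAt ℝ (fderiv ℝ Φ) p := fun p hp =>
    ((hΦ'.differentiableOn (by simp)).differentiableAt (hΩopen.mem_nhds hp))
  have hcont2 : ContinuousOn (fderiv ℝ (fderiv ℝ Φ)) Ω :=
    hΦ'.continuousOn_fderiv_of_isOpen hΩopen (by simp)
  -- identification of F with second derivative of Φ
  have hFeq : ∀ p ∈ Ω, F p.1 p.2
      = fderiv ℝ (fderiv ℝ Φ) p ((0 : ℝ), e i) ((0 : ℝ), e j) := by
    rintro ⟨s, q⟩ ⟨hs, -⟩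
    have hsmem : s ∈ Ioo (-δ) δ := hs
    set inr := ContinuousLinearMap.inr ℝ ℝ ((Fin n → ℝ) × ℝ) with hinrdef
    have hins : ∀ q' : (Fin n → ℝ) × ℝ,
        HasFDerivAt (fun q'' => ((s, q'') : ℝ × ((Fin n → ℝ) × ℝ))) inr q' := by
      intro q'
      have h0 : (fun q'' => ((s, q'') : ℝ × ((Fin n → ℝ) × ℝ)))
          = fun q'' => inr q'' + ((s, 0) : ℝ × ((Fin n → ℝ) × ℝ)) := by
        funext q''; simp [hinrdef, Prod.ext_iff]
      rw [h0]
      exact (ContinuousLinearMap.hasFDerivAt _).add_const _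
    have step1 : ∀ q' : (Fin n → ℝ) × ℝ,
        fderiv ℝ (fun q'' => Φ (s, q'')) q' = (fderiv ℝ Φ (s, q')).comp inr := by
      intro q'
      exact ((hdiffΦ (s, q') ⟨hsmem, mem_univ _⟩).hasFDerivAt.comp q' (hins q')).fderiv
    set L : (((ℝ × ((Fin n → ℝ) × ℝ)) →L[ℝ] ℝ)) →L[ℝ] (((Fin n → ℝ) × ℝ) →L[ℝ] ℝ) :=
      (ContinuousLinearMap.compL ℝ ((Fin n → ℝ) × ℝ) (ℝ × ((Fin n → ℝ) × ℝ)) ℝ).flip inr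
      with hLdef
    have hLapp : ∀ T : (ℝ × ((Fin n → ℝ) × ℝ)) →L[ℝ] ℝ, L T = T.comp inr := fun T => rfl
    have step2 : HasFDerivAt (fun q' => fderiv ℝ Φ (s, q'))
        ((fderiv ℝ (fderiv ℝ Φ) (s, q)).comp inr) q :=
      (hdiffΦ' (s, q) ⟨hsmem, mem_univ _⟩).hasFDerivAt.comp q (hins q)
    have step3 : fderiv ℝ (fderiv ℝ (fun q'' => Φ (s, q''))) q
        = L.comp ((fderiv ℝ (fderiv ℝ Φ) (s, q)).comp inr) := by
      have heq : fderiv ℝ (fun q'' => Φ (s, q''))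
          = fun q' => L (fderiv ℝ Φ (s, q')) := by
        funext q'; rw [step1 q', hLapp]
      rw [heq]
      exact (L.hasFDerivAt.comp q step2).fderiv
    show iteratedFDeriv ℝ 2 (fun q' => Φ (s, q')) q ![e i, e j] = _
    rw [iteratedFDeriv_two_apply, step3]
    simp [hLdef, hinrdef, Matrix.cons_val_zero, Matrix.cons_val_one, Matrix.head_cons]
  -- continuity of uncurried F on Ω
  have hFcont : ContinuousOn (fun p : ℝ × ((Fin n → ℝ) × ℝ) => F p.1 p.2) Ω := by
    have : ContinuousOn
        (fun p : ℝ × ((Fin n → ℝ) × ℝ) =>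
          fderiv ℝ (fderiv ℝ Φ) p ((0 : ℝ), e i) ((0 : ℝ), e j)) Ω :=
      (hcont2.clm_apply continuousOn_const).clm_apply continuousOn_const
    exact this.congr hFeq
  -- compactness
  have hKcomp : IsCompact K :=
    (isCompact_univ_pi fun _ => isCompact_Icc).prod isCompact_Icc
  have hSK : S ⊆ K := by
    rw [hSdef, hKdef, hY]
    refine Set.prod_mono ?_ Ioo_subset_Icc_self
    exact Set.pi_mono fun _ _ => Ioo_subset_Icc_self
  have hUK : U ×ˢ K ⊆ Ω := by
    rintro ⟨s, q⟩ ⟨hsU, -⟩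
    refine ⟨⟨?_, ?_⟩, mem_univ _⟩
    · have := hsU.1; simp only [hUdef] at this ⊢; linarith
    · have := hsU.2; linarith
  -- uniform convergence of F over U
  have hTU : TendstoUniformlyOn F (F 0) (𝓝[U] (0:ℝ)) K := by
    have hUC : UniformContinuousOn (Function.uncurry F) (U ×ˢ K) :=
      (isCompact_Icc.prod hKcomp).uniformContinuousOn_of_continuous
        ((hFcont.mono hUK))
    have h0U : (0:ℝ) ∈ U := by
      rw [hUdef]; exact ⟨by linarith, by linarith⟩
    exact hUC.tendstoUniformlyOn h0U
  -- the square-root map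
  have hU_nhds : U ∈ 𝓝 (0:ℝ) := Icc_mem_nhds (by linarith) (by linarith)
  have hsq0 : Tendsto (fun ε : ℝ => ε ^ ((1:ℝ)/2)) (𝓝[>] (0:ℝ)) (𝓝 0) := by
    have h1 : Tendsto Real.sqrt (𝓝[>] (0:ℝ)) (𝓝 0) := by
      have := (Real.continuous_sqrt.tendsto 0)
      rw [Real.sqrt_zero] at this
      exact this.mono_left nhdsWithin_le_nhds
    refine h1.congr' ?_
    filter_upwards [self_mem_nhdsWithin] with ε (hε : 0 < ε)
    rw [Real.sqrt_eq_rpow]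
  have hsq : Tendsto (fun ε : ℝ => ε ^ ((1:ℝ)/2)) (𝓝[>] (0:ℝ)) (𝓝[U] (0:ℝ)) := by
    rwa [nhdsWithin_eq_nhds.2 hU_nhds]
  -- compose
  have hT1 : TendstoUniformlyOn (fun ε q => F (ε ^ ((1:ℝ)/2)) q) (F 0) (𝓝[>] (0:ℝ)) K :=
    fun u hu => hsq.eventually (hTU u hu)
  have hT2 : TendstoUniformlyOn (fun ε q => F (ε ^ ((1:ℝ)/2)) q) (F 0) (𝓝[>] (0:ℝ)) S :=
    hT1.mono hSK
  -- identify limit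
  have hF0 : F 0 = fun q => iteratedFDeriv ℝ 2 B q ![e i, e j] := by
    have hΦ0 : (fun q' => Φ ((0:ℝ), q')) = B := by
      funext q'; simp [hΦdef, hB]
    funext q
    show iteratedFDeriv ℝ 2 (fun q' => Φ ((0:ℝ), q')) q ![e i, e j] = _
    rw [hΦ0]
  -- periodicity of b w.r.t. integer vectors
  have hper1 : ∀ (z : ℤ) (x : Fin n → ℝ) (i₀ : Fin n),
      b (x + (z : ℝ) • (Pi.single i₀ 1 : Fin n → ℝ)) = b x := by
    intro z
    induction z using Int.induction_on with
    | zero => intro x i₀; simp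
    | succ m ih =>
      intro x i₀
      have : x + ((m + 1 : ℤ) : ℝ) • (Pi.single i₀ 1 : Fin n → ℝ)
          = (x + (m : ℝ) • (Pi.single i₀ 1 : Fin n → ℝ)) + (Pi.single i₀ 1 : Fin n → ℝ) := by
        push_cast
        rw [add_smul, one_smul]
        abel
      rw [this, hb_per]
      exact_mod_cast ih x i₀
    | pred m ih =>
      intro x i₀
      have key : (x + ((-m - 1 : ℤ) : ℝ) • (Pi.single i₀ 1 : Fin n → ℝ))
            + (Pi.single i₀ 1 : Fin n → ℝ)
          = x + ((-m : ℤ) : ℝ) • (Pi.single i₀ 1 : Fin n → ℝ) := by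
        push_cast
        rw [sub_smul, neg_smul, one_smul]
        abel
      have h5 := hb_per (x + ((-m - 1 : ℤ) : ℝ) • (Pi.single i₀ 1 : Fin n → ℝ)) i₀
      rw [key] at h5
      rw [← h5]
      exact ih x i₀
  have hper : ∀ x : Fin n → ℝ, b ((fun i₀ => ((k i₀ : ℤ) : ℝ)) + x) = b x := by
    intro x
    have hsum : ∀ t : Finset (Fin n), ∀ x : Fin n → ℝ,
        b (x + ∑ i₀ ∈ t, ((k i₀ : ℝ)) • (Pi.single i₀ 1 : Fin n → ℝ)) = b x := by
      intro t
      induction t using Finset.induction_on with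
      | empty => intro x; simp
      | insert _ _ hnotmem ih =>
        intro x
        rename_i a t'
        rw [Finset.sum_insert hnotmem, show x + ((k a : ℝ) • (Pi.single a 1 : Fin n → ℝ)
            + ∑ i₀ ∈ t', ((k i₀ : ℝ)) • (Pi.single i₀ 1 : Fin n → ℝ))
          = (x + (k a : ℝ) • (Pi.single a 1 : Fin n → ℝ)) + ∑ i₀ ∈ t', ((k i₀ : ℝ)) • (Pi.single i₀ 1 : Fin n → ℝ)
          from by abel]
        rw [ih, hper1 (k a) x a]
    have hrepr : (fun i₀ => ((k i₀ : ℤ) : ℝ)) = ∑ i₀, ((k i₀ : ℝ)) • (Pi.single i₀ 1 : Fin n → ℝ) := by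
      funext j'
      simp [Finset.sum_apply, Pi.single_apply, mul_ite]
    rw [hrepr, add_comm]
    exact hsum Finset.univ x
  -- eventual equality on S
  have hEq : ∀ᶠ ε in 𝓝[>] (0:ℝ), Set.EqOn (fun q => F (ε ^ ((1:ℝ)/2)) q)
      (fun q => ε ^ ((1:ℝ)/2) * iteratedFDeriv ℝ 2 (h ε) (pt ε k q) ![e i, e j]) S := by
    filter_upwards [self_mem_nhdsWithin,
      hsq0.eventually_lt_const (show (0:ℝ) < δ/2 by linarith)] with ε (hε : 0 < ε) hεδ
    intro q hq
    obtain ⟨hq1, hq2⟩ : q.1 ∈ Y ∧ q.2 ∈ Ioo (-1 : ℝ) 0 := ⟨hq.1, hq.2⟩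
    set s : ℝ := ε ^ ((1:ℝ)/2) with hsdef
    have hs0 : 0 ≤ s := Real.rpow_nonneg hε.le _
    have hε32 : ε ^ ((3:ℝ)/2) = ε * s := by
      rw [hsdef, show (3:ℝ)/2 = 1 + 1/2 by norm_num, Real.rpow_add hε, Real.rpow_one]
    have hsε2 : s * ε ^ ((3:ℝ)/2) = ε ^ 2 := by
      rw [hsdef, ← Real.rpow_add hε, show (1:ℝ)/2 + 3/2 = 2 by norm_num]
      rw [show ((2:ℝ) = ((2:ℕ):ℝ)) by norm_num, Real.rpow_natCast]
    -- the explicit smooth version of h ε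
    set Fε : (Fin n → ℝ) × ℝ → ℝ :=
      fun p => g ε p.1 * ((p.2 + ε) / (g ε p.1 + ε)) ^ 4 with hFεdef
    have hgc : ContDiff ℝ (⊤ : ℕ∞) (fun p : (Fin n → ℝ) × ℝ => g ε p.1) := by
      have : (fun p : (Fin n → ℝ) × ℝ => g ε p.1)
          = fun p => ε ^ ((3:ℝ)/2) * b (ε⁻¹ • p.1) := by
        funext p; rw [hg]
      rw [this]
      exact contDiff_const.mul (hb.comp (contDiff_fst.const_smul ε⁻¹))
    have hgpos : ∀ p : (Fin n → ℝ) × ℝ, 0 < g ε p.1 + ε := by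
      intro p
      rw [hg]
      have h1 : 0 ≤ ε ^ ((3:ℝ)/2) * b (ε⁻¹ • p.1) :=
        mul_nonneg (Real.rpow_nonneg hε.le _) (hb_nonneg _)
      linarith
    have hFεsmooth : ContDiff ℝ (⊤ : ℕ∞) Fε := by
      refine hgc.mul (ContDiff.pow ?_ 4)
      exact (contDiff_snd.add contDiff_const).div (hgc.add contDiff_const)
        (fun p => (hgpos p).ne')
    -- step 1 : near pt ε k q, h ε coincides with Fε
    have heq1 : iteratedFDeriv ℝ 2 (h ε) (pt ε k q) = iteratedFDeriv ℝ 2 Fε (pt ε k q) := by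
      refine aux_iFD_congr_nhds ?_ 2
      have hW : {p : (Fin n → ℝ) × ℝ | -ε < p.2} ∈ 𝓝 (pt ε k q) := by
        refine (isOpen_lt continuous_const continuous_snd).mem_nhds ?_
        show -ε < (pt ε k q).2
        rw [hpt]
        have : ε * (-1) < ε * q.2 := (mul_lt_mul_iff_right₀ hε).2 hq2.1
        simpa using this
      filter_upwards [hW] with p (hp : -ε < p.2)
      rw [hh, if_neg (by linarith)]
    -- the affine change of variables
    set c : (Fin n → ℝ) × ℝ := (ε • (fun i₀ => ((k i₀ : ℤ) : ℝ)), 0) with hcdef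
    have hA : pt ε k q = ε • q + c := by
      rw [hpt]
      refine Prod.ext ?_ ?_
      · show ε • ((fun i₀ => ((k i₀ : ℤ) : ℝ)) + q.1) = ε • q.1 + ε • _
        rw [smul_add]; abel
      · show ε * q.2 = ε • q.2 + 0
        rw [smul_eq_mul, add_zero]
    -- explicit form of the rescaled function
    have hHeq : (fun y => Fε (ε • y + c)) = (ε ^ ((3:ℝ)/2)) • (fun q' => Φ (s, q')) := by
      funext q'
      have h1 : (ε • q' + c).1 = ε • q'.1 + ε • (fun i₀ => ((k i₀ : ℤ) : ℝ)) := rfl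
      have h2 : (ε • q' + c).2 = ε * q'.2 := by
        show ε • q'.2 + 0 = ε * q'.2
        rw [smul_eq_mul, add_zero]
      have hgval : g ε (ε • q' + c).1 = ε ^ ((3:ℝ)/2) * b q'.1 := by
        rw [h1, hg]
        congr 1
        rw [smul_add, inv_smul_smul₀ hε.ne', inv_smul_smul₀ hε.ne']
        rw [add_comm]
        exact hper q'.1
      show Fε (ε • q' + c) = ε ^ ((3:ℝ)/2) * Φ (s, q')
      rw [hFεdef]
      simp only
      rw [hgval, h2, hΦdef]
      simp only
      have hbnn := hb_nonneg q'.1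
      have hd : s * b q'.1 + 1 ≠ 0 := by positivity
      rw [show ε * q'.2 + ε = ε * (q'.2 + 1) by ring,
        show ε ^ ((3:ℝ)/2) * b q'.1 + ε = ε * (s * b q'.1 + 1) by rw [hε32]; ring,
        mul_div_mul_left _ _ hε.ne', div_pow, div_eq_mul_inv]
      rw [show (1 + s * b q'.1) = (s * b q'.1 + 1) by ring]
      ring
    have hφs : ContDiff ℝ (⊤ : ℕ∞) (fun q' : (Fin n → ℝ) × ℝ => Φ (s, q')) := by
      rw [hΦdef]
      simp only
      refine (ContDiff.mul ((hb.comp contDiff_fst)) ((contDiff_snd.add contDiff_const).pow 4)).mul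
        (ContDiff.inv (ContDiff.pow (contDiff_const.add
          (contDiff_const.mul (hb.comp contDiff_fst))) 4) ?_)
      intro q'
      have h1 : 0 ≤ s * b q'.1 := mul_nonneg hs0 (hb_nonneg _)
      positivity
    -- main computation
    have e2 : iteratedFDeriv ℝ 2 (fun y => Fε (ε • y + c)) q ![e i, e j]
        = (ε ^ 2) • iteratedFDeriv ℝ 2 Fε (pt ε k q) ![e i, e j] := by
      rw [aux_iFD2_affine Fε hFεsmooth ε c q (e i) (e j), ← hA]
    have e3 : iteratedFDeriv ℝ 2 (fun y => Fε (ε • y + c)) q ![e i, e j]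
        = (ε ^ ((3:ℝ)/2)) • iteratedFDeriv ℝ 2 (fun q' => Φ (s, q')) q ![e i, e j] := by
      rw [hHeq, iteratedFDeriv_const_smul_apply (hφs.of_le (by exact WithTop.coe_le_coe.2 (le_top : (2:ℕ∞) ≤ ⊤))).contDiffAt]
      rfl
    have key : (ε ^ 2) * iteratedFDeriv ℝ 2 Fε (pt ε k q) ![e i, e j]
        = ε ^ ((3:ℝ)/2) * F s q := by
      rw [hFdef]
      simp only
      rw [← smul_eq_mul, ← smul_eq_mul, ← e2, e3]
    show F s q = ε ^ ((1:ℝ)/2) * iteratedFDeriv ℝ 2 (h ε) (pt ε k q) ![e i, e j]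
    rw [heq1, ← hsdef]
    have hε2ne : (ε:ℝ) ^ 2 ≠ 0 := pow_ne_zero 2 hε.ne'
    apply mul_left_cancel₀ hε2ne
    calc ε ^ 2 * F s q = s * (ε ^ ((3:ℝ)/2) * F s q) := by rw [← hsε2]; ring
      _ = s * ((ε ^ 2) * iteratedFDeriv ℝ 2 Fε (pt ε k q) ![e i, e j]) := by rw [key]
      _ = ε ^ 2 * (s * iteratedFDeriv ℝ 2 Fε (pt ε k q) ![e i, e j]) := by ring
  -- conclude
  have final := hT2.congr hEq
  rw [hF0] at final
  exact final
end
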